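/- Let G = (V, E) be a finite connected simple graph, let (u_1, v_1), …, (u_k, v_k) be pairs of vertices with all 2k vertices u_1, v_1, …, u_k, v_k distinct, and suppose there exist pairwise vertex-disjoint paths Q_1, …, Q_k in G such that Q_i joins u_i to v_i and has at most L edges (L ≥ 1). Let π be the involution of V that swaps u_i with v_i for every i ∈ [k] and fixes all other vertices. Then rt(G, π) ≤ L + 1. -/

import Mathlib

/-- A routing round on `G`: the swap permutation of a matching of `G`, i.e. an involution
of the vertices that moves vertices only along edges of `G`. -/
def isRound {V : Type*} (G : SimpleGraph V) (σ : Equiv.Perm V) : Prop :=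
  σ * σ = 1 ∧ ∀ v : V, σ v ≠ v → G.Adj v (σ v)

/-- Composition, in order, of a list of round permutations: for `L = [σ₁, …, σₘ]`,
`rComp L = σₘ ∘ ⋯ ∘ σ₁`. -/
def rComp {V : Type*} (L : List (Equiv.Perm V)) : Equiv.Perm V :=
  L.foldl (fun p σ => σ * p) 1

/-- `rt(G, π)`: the minimum number of routing rounds (matchings of `G`) whose swap
permutations, composed in order, realize the permutation `π`. -/
noncomputable def rtP {V : Type*} (G : SimpleGraph V) (π : Equiv.Perm V) : ℕ :=
  sInf {m | ∃ L : List (Equiv.Perm V), L.length = m ∧ (∀ σ ∈ L, isRound G σ) ∧ rComp L = π}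

/-- `rt(G)`: the routing number of `G`, the maximum of `rt(G, π)` over all permutations. -/
noncomputable def rt {V : Type*} [Fintype V] [DecidableEq V] (G : SimpleGraph V) : ℕ :=
  Finset.univ.sup (rtP G)

/-!
Along a path `w₀ w₁ ⋯ w_ℓ` the endpoints can be exchanged in `ℓ + 1` rounds. For `ℓ ≥ 3`, the
single round `R` swapping `w₀ w₁` and `w_{ℓ-1} w_ℓ` conjugates the exchange of the endpoints
of the inner path `w₁ ⋯ w_{ℓ-1}` into `swap w₀ w_ℓ`; so `R`, a routing of the inner path, and
`R` again take `ℓ + 1` rounds. Routings supported on vertex-disjoint paths commute, and after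
padding them with identity rounds to the common length `L + 1` they run in parallel, round by
round, their product being the required involution.
-/

open Equiv

section Routing

variable {V : Type*} {G : SimpleGraph V}

lemma rComp_eq_prod_reverse (L : List (Perm V)) : rComp L = L.reverse.prod := by
  suffices ∀ ρ, L.foldl (fun p σ => σ * p) ρ = L.reverse.prod * ρ by simpa [rComp] using this 1
  induction L with
  | nil => simp
  | cons a L ih => intro ρ; simp [ih, mul_assoc]

lemma rComp_cons (a : Perm V) (L : List (Perm V)) : rComp (a :: L) = rComp L * a := by
  simp [rComp_eq_prod_reverse]

lemma rComp_append (A B : List (Perm V)) : rComp (A ++ B) = rComp B * rComp A := by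
  simp [rComp_eq_prod_reverse]

lemma rComp_zipWith_mul {A B : List (Perm V)} (hAB : A.length = B.length)
    (hcomm : ∀ a ∈ A, ∀ b ∈ B, Commute a b) :
    rComp (List.zipWith (· * ·) A B) = rComp A * rComp B := by
  induction A generalizing B with
  | nil => cases B <;> simp_all [rComp]
  | cons a A ih =>
    obtain _ | ⟨b, B⟩ := B
    · simp at hAB
    have hA : Commute a (rComp B) := by
      rw [rComp_eq_prod_reverse]
      exact Commute.list_prod_right _ _ fun b hb =>
        hcomm a List.mem_cons_self b (List.mem_cons_of_mem _ (List.mem_reverse.1 hb))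
    rw [List.zipWith_cons_cons, rComp_cons, rComp_cons, rComp_cons,
      ih (by simpa using hAB) fun a' ha' b' hb' =>
        hcomm a' (List.mem_cons_of_mem _ ha') b' (List.mem_cons_of_mem _ hb'),
      mul_assoc, mul_assoc, ← mul_assoc (rComp B), ← hA.eq, mul_assoc]

lemma isRound_one : isRound G 1 := ⟨mul_one 1, fun _ h => (h rfl).elim⟩

lemma isRound_swap [DecidableEq V] {a b : V} (h : G.Adj a b) : isRound G (swap a b) := by
  refine ⟨swap_mul_self a b, fun x hx => ?_⟩
  rw [swap_apply_def] at hx ⊢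
  split_ifs at hx ⊢ with hxa hxb
  · exact hxa ▸ h
  · exact hxb ▸ h.symm
  · exact (hx rfl).elim

lemma isRound.mul {σ τ : Perm V} (hσ : isRound G σ) (hτ : isRound G τ) (h : σ.Disjoint τ) :
    isRound G (σ * τ) := by
  refine ⟨?_, fun x hx => ?_⟩
  · rw [h.commute.symm.mul_mul_mul_comm, hσ.1, hτ.1, one_mul]
  rcases h x with hσx | hτx
  · rw [h.commute.eq, Perm.mul_apply, hσx] at hx ⊢
    exact hτ.2 x hx
  · rw [Perm.mul_apply, hτx] at hx ⊢
    exact hσ.2 x hx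

def RoutableOn (G : SimpleGraph V) (S : Set V) (m : ℕ) (σ : Perm V) : Prop :=
  ∃ L : List (Perm V), L.length = m ∧ (∀ τ ∈ L, isRound G τ ∧ ∀ x ∉ S, τ x = x) ∧ rComp L = σ

namespace RoutableOn

variable {S T : Set V} {m n : ℕ} {ρ σ τ : Perm V}

lemma rtP_le (h : RoutableOn G S m σ) : rtP G σ ≤ m := by
  obtain ⟨L, hlen, hL, hcomp⟩ := h
  exact Nat.sInf_le ⟨L, hlen, fun τ hτ => (hL τ hτ).1, hcomp⟩

lemma apply_eq_of_notMem (h : RoutableOn G S m σ) {x : V} (hx : x ∉ S) : σ x = x := by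
  obtain ⟨L, -, hL, rfl⟩ := h
  rw [rComp_eq_prod_reverse]
  exact (MulAction.stabilizer (Perm V) x).list_prod_mem fun τ hτ =>
    (hL τ (List.mem_reverse.1 hτ)).2 x hx

lemma disjoint (hσ : RoutableOn G S m σ) (hτ : RoutableOn G T n τ) (hST : Disjoint S T) :
    σ.Disjoint τ := by
  intro x
  by_cases hx : x ∈ S
  · exact .inr (hτ.apply_eq_of_notMem (Set.disjoint_left.1 hST hx))
  · exact .inl (hσ.apply_eq_of_notMem hx)

lemma of_isRound (hσ : isRound G σ) (hS : ∀ x ∉ S, σ x = x) : RoutableOn G S 1 σ :=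
  ⟨[σ], rfl, by simpa using ⟨hσ, hS⟩, by simp [rComp]⟩

lemma swap [DecidableEq V] {a b : V} (h : G.Adj a b) (ha : a ∈ S) (hb : b ∈ S) :
    RoutableOn G S 1 (swap a b) :=
  of_isRound (isRound_swap h) fun _ hx =>
    swap_apply_of_ne_of_ne (ne_of_mem_of_not_mem ha hx).symm (ne_of_mem_of_not_mem hb hx).symm

lemma one (S : Set V) (m : ℕ) : RoutableOn G S m 1 := by
  refine ⟨List.replicate m 1, List.length_replicate, fun τ hτ => ?_, ?_⟩
  · rw [List.eq_of_mem_replicate hτ]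
    exact ⟨isRound_one, fun _ _ => rfl⟩
  · simp [rComp_eq_prod_reverse]

lemma append (hσ : RoutableOn G S m σ) (hτ : RoutableOn G S n τ) :
    RoutableOn G S (m + n) (τ * σ) := by
  obtain ⟨A, rfl, hA, rfl⟩ := hσ
  obtain ⟨B, rfl, hB, rfl⟩ := hτ
  refine ⟨A ++ B, List.length_append, fun ρ hρ => ?_, rComp_append A B⟩
  rcases List.mem_append.1 hρ with hρ | hρ
  exacts [hA ρ hρ, hB ρ hρ]

lemma mono_rounds (h : RoutableOn G S m σ) (hmn : m ≤ n) : RoutableOn G S n σ := by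
  simpa [Nat.add_sub_cancel' hmn] using h.append (one S (n - m))

lemma mono_set (h : RoutableOn G S m σ) (hST : S ⊆ T) : RoutableOn G T m σ := by
  obtain ⟨L, hlen, hL, hcomp⟩ := h
  exact ⟨L, hlen, fun τ hτ => ⟨(hL τ hτ).1, fun x hx => (hL τ hτ).2 x fun h => hx (hST h)⟩, hcomp⟩

lemma mul (hσ : RoutableOn G S m σ) (hτ : RoutableOn G T m τ) (hST : Disjoint S T) :
    RoutableOn G (S ∪ T) m (σ * τ) := by
  obtain ⟨A, hAlen, hA, rfl⟩ := hσ
  obtain ⟨B, hBlen, hB, rfl⟩ := hτ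
  have hdisj : ∀ a ∈ A, ∀ b ∈ B, a.Disjoint b := fun a ha b hb =>
    (of_isRound (hA a ha).1 (hA a ha).2).disjoint (of_isRound (hB b hb).1 (hB b hb).2) hST
  refine ⟨List.zipWith (· * ·) A B, by simp [hAlen, hBlen], fun ρ hρ => ?_,
    rComp_zipWith_mul (hAlen.trans hBlen.symm) fun a ha b hb => (hdisj a ha b hb).commute⟩
  rw [← List.map_uncurry_zip_eq_zipWith] at hρ
  obtain ⟨⟨a, b⟩, hab, rfl⟩ := List.mem_map.1 hρ
  obtain ⟨ha, hb⟩ := List.of_mem_zip hab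
  refine ⟨(hA a ha).1.mul (hB b hb).1 (hdisj a ha b hb), fun x hx => ?_⟩
  rw [Set.mem_union, not_or] at hx
  rw [Function.uncurry_apply_pair, Perm.mul_apply, (hB b hb).2 x hx.2, (hA a ha).2 x hx.1]

lemma inv_eq_self (h : RoutableOn G S 1 σ) : σ⁻¹ = σ := by
  obtain ⟨L, hlen, hL, rfl⟩ := h
  obtain ⟨ρ, rfl⟩ := List.length_eq_one_iff.1 hlen
  simpa [rComp] using inv_eq_of_mul_eq_one_right (hL ρ List.mem_cons_self).1.1

lemma conj (hρ : RoutableOn G S 1 ρ) (hσ : RoutableOn G S m σ) :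
    RoutableOn G S (m + 2) (ρ * σ * ρ⁻¹) := by
  rw [hρ.inv_eq_self, mul_assoc, show m + 2 = 1 + m + 1 by omega]
  exact (hρ.append hσ).append hρ

end RoutableOn

lemma routableOn_swap_of_chain [DecidableEq V] {S : Set V} :
    ∀ (ℓ : ℕ) (w : ℕ → V), Set.InjOn w {i | i ≤ ℓ} → (∀ i < ℓ, G.Adj (w i) (w (i + 1))) →
      (∀ i ≤ ℓ, w i ∈ S) → RoutableOn G S (ℓ + 1) (swap (w 0) (w ℓ))
  | 0, w, _, _, _ => by rw [swap_self]; exact RoutableOn.one S 1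
  | 1, w, _, hadj, hS =>
    (RoutableOn.swap (hadj 0 one_pos) (hS 0 zero_le_one) (hS 1 le_rfl)).mono_rounds one_le_two
  | 2, w, hinj, hadj, hS => by
    -- the two end edges share `w 1`, so conjugate by one of them only
    have hw : w 2 ≠ w 0 ∧ w 2 ≠ w 1 := ⟨hinj.ne (by simp) (by simp) (by simp),
      hinj.ne (by simp) (by simp) (by simp)⟩
    have h := (RoutableOn.swap (hadj 0 (by simp)) (hS 0 (by simp)) (hS 1 (by simp))).conj
      (RoutableOn.swap (hadj 1 (by simp)) (hS 1 (by simp)) (hS 2 le_rfl))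
    rwa [← swap_apply_apply, swap_apply_right, swap_apply_of_ne_of_ne hw.1 hw.2] at h
  | n + 3, w, hinj, hadj, hS => by
    have hne : ∀ i ≤ n + 3, ∀ j ≤ n + 3, i ≠ j → w i ≠ w j := fun i hi j hj => hinj.ne hi hj
    set R := swap (w 0) (w 1) * swap (w (n + 2)) (w (n + 3))
    have hR : RoutableOn G S 1 R := by
      refine ((RoutableOn.swap (S := {w 0, w 1}) (hadj 0 (by omega)) (by simp) (by simp)).mul
        (RoutableOn.swap (S := {w (n + 2), w (n + 3)}) (hadj (n + 2) (by omega)) (by simp)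
          (by simp)) ?_).mono_set ?_
      · simp only [Set.disjoint_insert_left, Set.disjoint_singleton_left, Set.mem_insert_iff,
          Set.mem_singleton_iff, not_or]
        refine ⟨⟨hne _ ?_ _ ?_ ?_, hne _ ?_ _ ?_ ?_⟩, hne _ ?_ _ ?_ ?_, hne _ ?_ _ ?_ ?_⟩ <;> omega
      · rintro x ((rfl | rfl) | (rfl | rfl)) <;> exact hS _ (by omega)
    have hinner := routableOn_swap_of_chain (n + 1) (fun i => w (i + 1))
      (fun i hi j hj hij => by simpa using hinj (by simp at hi ⊢; omega) (by simp at hj ⊢; omega) hij)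
      (fun i hi => hadj (i + 1) (by omega)) (fun i hi => hS (i + 1) (by omega))
    have hR1 : R (w 1) = w 0 := by
      rw [Perm.mul_apply, swap_apply_of_ne_of_ne (hne 1 _ _ _ (by omega)) (hne 1 _ _ _ (by omega)),
        swap_apply_right] <;> omega
    have hR2 : R (w (n + 2)) = w (n + 3) := by
      rw [Perm.mul_apply, swap_apply_left,
        swap_apply_of_ne_of_ne (hne _ _ 0 _ (by omega)) (hne _ _ 1 _ (by omega))] <;> omega
    have h := hR.conj hinner
    rwa [← swap_apply_apply, hR1, hR2] at h

lemma routableOn_swap_of_isPath [DecidableEq V] {a b : V} {p : G.Walk a b} (hp : p.IsPath) :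
    RoutableOn G {x | x ∈ p.support} (p.length + 1) (swap a b) := by
  simpa using routableOn_swap_of_chain p.length p.getVert hp.getVert_injOn
    (fun i hi => p.adj_getVert_succ hi)
    (fun i hi => SimpleGraph.Walk.mem_support_iff_exists_getVert.2 ⟨i, rfl, hi⟩)

lemma exists_routableOn_biUnion {ι : Type*} (s : Finset ι) {S : ι → Set V} {σ : ι → Perm V}
    {m : ℕ} (hS : (s : Set ι).PairwiseDisjoint S) (hσ : ∀ i ∈ s, RoutableOn G (S i) m (σ i)) :
    ∃ τ, RoutableOn G (⋃ i ∈ s, S i) m τ ∧ ∀ i ∈ s, ∀ x ∈ S i, τ x = σ i x := by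
  classical
  induction s using Finset.induction_on with
  | empty => exact ⟨1, by simpa using RoutableOn.one (G := G) ∅ m, by simp⟩
  | insert i s hi ih =>
    rw [Finset.coe_insert, Set.pairwiseDisjoint_insert] at hS
    obtain ⟨τ, hτ, hτσ⟩ := ih hS.1 fun j hj => hσ j (Finset.mem_insert_of_mem hj)
    have hσi := hσ i (Finset.mem_insert_self i s)
    have hdisj : Disjoint (S i) (⋃ j ∈ s, S j) :=
      Set.disjoint_iUnion₂_right.2 fun j hj => hS.2 j hj fun h => hi (h ▸ hj)
    refine ⟨σ i * τ, by simpa [Finset.set_biUnion_insert] using hσi.mul hτ hdisj, ?_⟩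
    intro j hj x hx
    rcases Finset.mem_insert.1 hj with rfl | hj
    · rw [Perm.mul_apply, hτ.apply_eq_of_notMem (Set.disjoint_left.1 hdisj hx)]
    · rw [(hσi.disjoint hτ hdisj).commute.eq, Perm.mul_apply,
        hσi.apply_eq_of_notMem (Set.disjoint_right.1 hdisj (Set.mem_biUnion hj hx)), hτσ j hj x hx]

end Routing

theorem rtP_swap_along_disjoint_paths_general
    {V : Type*} (G : SimpleGraph V)
    (k L : ℕ) (u v : Fin k → V)
    (Q : ∀ i : Fin k, G.Walk (u i) (v i))
    (hpath : ∀ i, (Q i).IsPath)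
    (hlen : ∀ i, (Q i).length ≤ L)
    (hdisj : ∀ i j, i ≠ j → ∀ x : V, x ∈ (Q i).support → x ∉ (Q j).support)
    (π : Equiv.Perm V)
    (hswap : ∀ i, π (u i) = v i ∧ π (v i) = u i)
    (hfix : ∀ x : V, (∀ i, x ≠ u i ∧ x ≠ v i) → π x = x) :
    rtP G π ≤ L + 1 := by
  classical
  obtain ⟨τ, hτ, hτ_swap⟩ := exists_routableOn_biUnion Finset.univ
    (S := fun i => {x | x ∈ (Q i).support})
    (fun i _ j _ hij => Set.disjoint_left.2 (hdisj i j hij))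
    fun i _ => (routableOn_swap_of_isPath (hpath i)).mono_rounds (Nat.succ_le_succ (hlen i))
  have hends : ∀ i j, i ≠ j → ∀ x ∈ (Q i).support, x ≠ u j ∧ x ≠ v j := fun i j hij x hx =>
    ⟨fun h => hdisj i j hij x hx (h ▸ (Q j).start_mem_support),
      fun h => hdisj i j hij x hx (h ▸ (Q j).end_mem_support)⟩
  suffices τ = π from this ▸ hτ.rtP_le
  ext x
  by_cases hx : ∃ i, x ∈ (Q i).support
  · obtain ⟨i, hxi⟩ := hx
    rw [hτ_swap i (Finset.mem_univ i) x hxi, swap_apply_def]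
    split_ifs with hu hv
    · exact hu ▸ (hswap i).1.symm
    · exact hv ▸ (hswap i).2.symm
    · refine (hfix x fun j => ?_).symm
      obtain rfl | hij := eq_or_ne i j
      exacts [⟨hu, hv⟩, hends i j hij x hxi]
  · rw [not_exists] at hx
    rw [hτ.apply_eq_of_notMem (by simpa using hx), hfix x fun j =>
      ⟨fun h => hx j (h ▸ (Q j).start_mem_support), fun h => hx j (h ▸ (Q j).end_mem_support)⟩]

/-- If `(u i, v i)`, `i < k`, are pairs of vertices with all `2k` vertices distinct, joined by
pairwise vertex-disjoint paths of length at most `L ≥ 1`, then the involution swapping each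
`u i` with `v i` (and fixing all other vertices) can be routed in at most `L + 1` rounds. -/
theorem rtP_swap_along_disjoint_paths
    {V : Type*} [Fintype V] [DecidableEq V] (G : SimpleGraph V) (hG : G.Connected)
    (k L : ℕ) (hL : 1 ≤ L) (u v : Fin k → V)
    (hinj : Function.Injective (Sum.elim u v : Fin k ⊕ Fin k → V))
    (Q : ∀ i : Fin k, G.Walk (u i) (v i))
    (hpath : ∀ i, (Q i).IsPath)
    (hlen : ∀ i, (Q i).length ≤ L)
    (hdisj : ∀ i j, i ≠ j → ∀ x : V, x ∈ (Q i).support → x ∉ (Q j).support)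
    (π : Equiv.Perm V)
    (hswap : ∀ i, π (u i) = v i ∧ π (v i) = u i)
    (hfix : ∀ x : V, (∀ i, x ≠ u i ∧ x ≠ v i) → π x = x) :
    rtP G π ≤ L + 1 :=
  rtP_swap_along_disjoint_paths_general G k L u v Q hpath hlen hdisj π hswap hfix
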